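/- Let G be a graph, x ∈ V(G), and 2 ≤ k ≤ ν(G). Then the colon ideal (I(G)^{[k]} : x) equals ∑_{y ∈ N_G(x)} y · I(G \ {x,y})^{[k-1]} + I(G \ N_G[x])^{[k]}, where N_G(x) is the set of neighbors of x and N_G[x] = N_G(x) ∪ {x}. -/

import Mathlib

open MvPolynomial

noncomputable section

/-- The product of the two variables corresponding to the endpoints of an edge. -/
def edgeProd (K : Type*) [CommSemiring K] {V : Type*} (e : Sym2 V) : MvPolynomial V K :=
  Sym2.lift ⟨fun a b => X a * X b, fun a b => mul_comm _ _⟩ e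

/-- The edge ideal of a simple graph. -/
def edgeIdeal (K : Type*) [CommSemiring K] {V : Type*} (G : SimpleGraph V) :
    Ideal (MvPolynomial V K) :=
  Ideal.span {p | ∃ e ∈ G.edgeSet, p = edgeProd K e}

/-- A finite set of edges of `G` forming a matching (pairwise disjoint edges). -/
def IsMatchingSet {V : Type*} (G : SimpleGraph V) (M : Finset (Sym2 V)) : Prop :=
  (↑M : Set (Sym2 V)) ⊆ G.edgeSet ∧
    (↑M : Set (Sym2 V)).Pairwise fun e f => ∀ v, v ∈ e → v ∉ f

/-- The matching number of a graph: the maximum size of a matching. -/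
def matchingNumber {V : Type*} (G : SimpleGraph V) : ℕ :=
  sSup {k | ∃ M : Finset (Sym2 V), IsMatchingSet G M ∧ M.card = k}

/-- The ideal generated by the squarefree monomials `∏_{e ∈ M} x_e` over all
`k`-matchings `M` of `G`; this is the `k`-th squarefree (matching) power of the edge ideal. -/
def matchingPow (K : Type*) [CommSemiring K] {V : Type*} (G : SimpleGraph V) (k : ℕ) :
    Ideal (MvPolynomial V K) :=
  Ideal.span {p | ∃ M : Finset (Sym2 V), IsMatchingSet G M ∧ M.card = k ∧
    p = ∏ e ∈ M, edgeProd K e}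

/-- The `k`-th squarefree power of an ideal: the ideal generated by all squarefree
monomials belonging to `I ^ k`. -/
def sqfreePow {K V : Type*} [CommSemiring K] (I : Ideal (MvPolynomial V K)) (k : ℕ) :
    Ideal (MvPolynomial V K) :=
  Ideal.span {p | (∃ A : Finset V, p = ∏ v ∈ A, X v) ∧ p ∈ I ^ k}

/-- Deleting a set of vertices from a graph (keeping the ambient vertex type:
all edges meeting `W` are removed). -/
def delVerts {V : Type*} (G : SimpleGraph V) (W : Set V) : SimpleGraph V where
  Adj a b := G.Adj a b ∧ a ∉ W ∧ b ∉ W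
  symm := ⟨fun a b h => ⟨h.1.symm, h.2.2, h.2.1⟩⟩
  loopless := ⟨fun a h => G.loopless.irrefl a h.1⟩

/-- The whisker graph `W(G)`: to each vertex `x` of `G` (viewed as `inl x`) one
attaches a new pendant vertex `inr x`. -/
def whiskerGraph {V : Type*} (G : SimpleGraph V) : SimpleGraph (V ⊕ V) :=
  SimpleGraph.fromRel fun a b =>
    (∃ u v, G.Adj u v ∧ a = Sum.inl u ∧ b = Sum.inl v) ∨ (∃ u, a = Sum.inl u ∧ b = Sum.inr u)

/-- The depth of `R/I` (w.r.t. the graded maximal ideal generated by the variables),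
defined as the supremum of lengths of `R/I`-regular sequences of elements of that ideal. -/
def quotDepth {K V : Type*} [Field K] (I : Ideal (MvPolynomial V K)) : ℕ :=
  sSup {n | ∃ rs : List (MvPolynomial V K), rs.length = n ∧
    (∀ r ∈ rs, r ∈ Ideal.span (Set.range (X : V → MvPolynomial V K))) ∧
    RingTheory.Sequence.IsRegular (MvPolynomial V K ⧸ I) rs}

/-- A finite graded free resolution of an ideal `I` of a polynomial ring, with
`rk i` the rank of the `i`-th free module and `deg i t` the degree (twist) of its
`t`-th basis element. -/
structure GradedFreeResolution {K V : Type*} [Field K] (I : Ideal (MvPolynomial V K)) where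
  rk : ℕ → ℕ
  deg : (i : ℕ) → Fin (rk i) → ℕ
  len : ℕ
  rk_eq_zero : ∀ i, len < i → rk i = 0
  aug : (Fin (rk 0) → MvPolynomial V K) →ₗ[MvPolynomial V K] MvPolynomial V K
  diff : (i : ℕ) →
    (Fin (rk (i + 1)) → MvPolynomial V K) →ₗ[MvPolynomial V K] (Fin (rk i) → MvPolynomial V K)
  aug_homogeneous : ∀ s : Fin (rk 0), (aug (Pi.single s 1)).IsHomogeneous (deg 0 s)
  diff_homogeneous : ∀ i (s : Fin (rk (i + 1))) (t : Fin (rk i)),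
    (diff i (Pi.single s 1) t).IsHomogeneous (deg (i + 1) s - deg i t) ∧
      (deg (i + 1) s < deg i t → diff i (Pi.single s 1) t = 0)
  range_aug : LinearMap.range aug = I
  exact_zero : LinearMap.ker aug = LinearMap.range (diff 0)
  exact_succ : ∀ i, LinearMap.ker (diff i) = LinearMap.range (diff (i + 1))

/-- The Castelnuovo–Mumford regularity of an ideal `I` of a polynomial ring: the least
`r` such that `I` admits a finite graded free resolution all of whose `i`-th twists are
at most `r + i`. -/
noncomputable def regCM {K V : Type*} [Field K] (I : Ideal (MvPolynomial V K)) : ℕ :=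
  sInf {r | ∃ F : GradedFreeResolution I, ∀ i (t : Fin (F.rk i)), F.deg i t ≤ r + i}

end

/-!
A monomial `m` lies in `(I(G)^{[k]} : x)` iff `x·m` is divisible by the product of the edges
of some `k`-matching `M`. If `x` is covered by an edge `xy` of `M`, then `m` is divisible by
`y` times the `(k-1)`-matching `M ∖ {xy}` of `G ∖ {x,y}`. If `x` is uncovered, then `M` already
divides `m`: either some edge `yz` of `M` meets a neighbour `y` of `x`, and `m` is divisible by
`y` times the `(k-1)`-matching `M ∖ {yz}` of `G ∖ {x,y}`, or `M` is a `k`-matching of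
`G ∖ N_G[x]`. Conversely, adding the edge `xy` to a `(k-1)`-matching of `G ∖ {x,y}` gives a
`k`-matching of `G`.
-/

noncomputable section

variable {K V : Type*}

namespace Finsupp

theorem le_of_le_add_single_of_apply_eq_zero {a d : V →₀ ℕ} {x : V} {n : ℕ} (ha : a x = 0)
    (h : a ≤ d + single x n) : a ≤ d := by
  classical
  intro v
  by_cases hv : v = x
  · subst hv
    simp [ha]
  · simpa [single_apply, Ne.symm hv] using h v

end Finsupp

section Monomials

variable [CommSemiring K]

theorem MvPolynomial.monomial_mem_of_le {I : Ideal (MvPolynomial V K)} {s d : V →₀ ℕ}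
    (hs : monomial s 1 ∈ I) (h : s ≤ d) (c : K) : monomial d c ∈ I := by
  have hsplit : monomial d c = monomial (d - s) c * monomial s 1 := by
    rw [monomial_mul, mul_one, tsub_add_cancel_of_le h]
  rw [hsplit]
  exact I.mul_mem_left _ hs

def edgeDeg (e : Sym2 V) : V →₀ ℕ :=
  Sym2.lift ⟨fun a b => Finsupp.single a 1 + Finsupp.single b 1, fun _ _ => add_comm _ _⟩ e

@[simp]
theorem edgeDeg_mk (a b : V) : edgeDeg s(a, b) = Finsupp.single a 1 + Finsupp.single b 1 :=
  rfl

theorem edgeDeg_apply_eq_zero {e : Sym2 V} {v : V} (h : v ∉ e) : edgeDeg e v = 0 := by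
  classical
  induction e using Sym2.ind with
  | _ a b =>
    obtain ⟨hva, hvb⟩ : v ≠ a ∧ v ≠ b := by simpa using h
    simp [Ne.symm hva, Ne.symm hvb]

theorem edgeProd_eq_monomial (e : Sym2 V) : edgeProd K e = monomial (edgeDeg e) 1 := by
  induction e using Sym2.ind with
  | _ a b => simp [edgeProd, X, monomial_mul]

theorem prod_edgeProd_eq_monomial (M : Finset (Sym2 V)) :
    ∏ e ∈ M, edgeProd K e = monomial (∑ e ∈ M, edgeDeg e) 1 := by
  classical
  induction M using Finset.induction_on with
  | empty => simp
  | insert e M he ih =>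
    rw [Finset.prod_insert he, Finset.sum_insert he, ih, edgeProd_eq_monomial, monomial_mul,
      one_mul]

theorem matchingPow_eq_span_monomial (G : SimpleGraph V) (k : ℕ) :
    matchingPow K G k = Ideal.span ((fun s => monomial s (1 : K)) ''
      {s | ∃ M : Finset (Sym2 V), IsMatchingSet G M ∧ M.card = k ∧
        s = ∑ e ∈ M, edgeDeg e}) := by
  unfold matchingPow
  congr 1
  ext p
  constructor
  · rintro ⟨M, hM, hcard, rfl⟩
    exact ⟨_, ⟨M, hM, hcard, rfl⟩, (prod_edgeProd_eq_monomial M).symm⟩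
  · rintro ⟨_, ⟨M, hM, hcard, rfl⟩, rfl⟩
    exact ⟨M, hM, hcard, (prod_edgeProd_eq_monomial M).symm⟩

end Monomials

section Matchings

variable {G : SimpleGraph V} {M N : Finset (Sym2 V)} {W : Set V}

theorem mem_edgeSet_delVerts {e : Sym2 V} :
    e ∈ (delVerts G W).edgeSet ↔ e ∈ G.edgeSet ∧ ∀ w ∈ e, w ∉ W := by
  induction e using Sym2.ind with
  | _ a b => simp [delVerts]

theorem isMatchingSet_delVerts_iff :
    IsMatchingSet (delVerts G W) M ↔ IsMatchingSet G M ∧ ∀ e ∈ M, ∀ w ∈ e, w ∉ W := by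
  simp only [IsMatchingSet, Set.subset_def, Finset.mem_coe, mem_edgeSet_delVerts]
  grind

theorem IsMatchingSet.subset (hM : IsMatchingSet G M) (hNM : N ⊆ M) : IsMatchingSet G N :=
  ⟨fun _ he => hM.1 (hNM he), hM.2.mono (Finset.coe_subset.2 hNM)⟩

theorem IsMatchingSet.insert [DecidableEq V] {e : Sym2 V} (hM : IsMatchingSet G M)
    (he : e ∈ G.edgeSet) (hdisj : ∀ f ∈ M, ∀ v ∈ e, v ∉ f) :
    IsMatchingSet G (insert e M) := by
  refine ⟨?_, ?_⟩
  · rw [Finset.coe_insert]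
    exact Set.insert_subset he hM.1
  · rw [Finset.coe_insert, Set.pairwise_insert]
    exact ⟨hM.2, fun f hf _ => ⟨hdisj f hf, fun v hvf hve => hdisj f hf v hve hvf⟩⟩

theorem IsMatchingSet.erase_delVerts [DecidableEq V] {e : Sym2 V} (hM : IsMatchingSet G M)
    (he : e ∈ M) (hW : ∀ w ∈ W, w ∈ e ∨ ∀ f ∈ M, w ∉ f) :
    IsMatchingSet (delVerts G W) (M.erase e) := by
  refine isMatchingSet_delVerts_iff.2 ⟨hM.subset (Finset.erase_subset e M), ?_⟩
  intro f hf w hwf hwW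
  rcases hW w hwW with hwe | hfree
  · exact hM.2 he (Finset.mem_of_mem_erase hf) (Finset.ne_of_mem_erase hf).symm w hwe hwf
  · exact hfree f (Finset.mem_of_mem_erase hf) hwf

end Matchings

section Colon

variable [CommSemiring K] {G : SimpleGraph V} {x y : V} {k : ℕ}

theorem X_mul_X_mul_mem_matchingPow (hxy : G.Adj x y) {p : MvPolynomial V K}
    (hp : p ∈ matchingPow K (delVerts G {x, y}) k) :
    X x * X y * p ∈ matchingPow K G (k + 1) := by
  classical
  suffices matchingPow K (delVerts G {x, y}) k ≤ (matchingPow K G (k + 1)).colon {X x * X y} by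
    simpa [mul_comm] using this hp
  refine Ideal.span_le.2 ?_
  rintro _ ⟨M, hM, rfl, rfl⟩
  obtain ⟨hMG, hMavoid⟩ := isMatchingSet_delVerts_iff.1 hM
  have hdisj : ∀ f ∈ M, ∀ v ∈ s(x, y), v ∉ f := by
    intro f hf v hv hvf
    exact hMavoid f hf v hvf (by simpa using hv)
  have hxy_notMem : s(x, y) ∉ M := fun h =>
    hdisj _ h x (Sym2.mem_mk_left x y) (Sym2.mem_mk_left x y)
  rw [SetLike.mem_coe, Submodule.mem_colon_singleton, smul_eq_mul]
  refine Ideal.subset_span ⟨insert s(x, y) M, hMG.insert hxy hdisj,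
    Finset.card_insert_of_notMem hxy_notMem, ?_⟩
  rw [Finset.prod_insert hxy_notMem, edgeProd, Sym2.lift_mk]
  ring

variable (K G x k) in
def vertexColonIdeal : Ideal (MvPolynomial V K) :=
  (⨆ y ∈ G.neighborSet x,
      Ideal.span {(X y : MvPolynomial V K)} * matchingPow K (delVerts G {x, y}) (k - 1)) +
    matchingPow K (delVerts G (insert x (G.neighborSet x))) k

theorem X_mul_mem_vertexColonIdeal (hxy : G.Adj x y) {p : MvPolynomial V K}
    (hp : p ∈ matchingPow K (delVerts G {x, y}) (k - 1)) : X y * p ∈ vertexColonIdeal K G x k :=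
  Submodule.mem_sup_left <| Submodule.mem_iSup_of_mem y <| Submodule.mem_iSup_of_mem hxy <|
    Ideal.mul_mem_mul (Ideal.mem_span_singleton_self _) hp

theorem vertexColonIdeal_le_colon (hk : k ≠ 0) :
    vertexColonIdeal K G x k ≤
      (matchingPow K G k).colon (Ideal.span {(X x : MvPolynomial V K)}) := by
  refine sup_le (iSup₂_le fun y hxy => Ideal.mul_le.2 fun a ha p hp => ?_) fun p hp => ?_
  all_goals rw [Ideal.mem_colon_span_singleton]
  · obtain ⟨c, rfl⟩ := Ideal.mem_span_singleton'.1 ha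
    have hxyp := X_mul_X_mul_mem_matchingPow (K := K) hxy hp
    rw [Nat.sub_add_cancel (Nat.one_le_iff_ne_zero.2 hk)] at hxyp
    rw [show c * X y * p * X x = c * (X x * X y * p) by ring]
    exact (matchingPow K G k).mul_mem_left c hxyp
  · refine (matchingPow K G k).mul_mem_right _ ((Ideal.span_mono ?_) hp)
    rintro _ ⟨M, hM, hcard, rfl⟩
    exact ⟨M, (isMatchingSet_delVerts_iff.1 hM).1, hcard, rfl⟩

theorem monomial_mem_vertexColonIdeal_of_neighbor (hxy : G.Adj x y) {M : Finset (Sym2 V)}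
    (hM : IsMatchingSet (delVerts G {x, y}) M) (hcard : M.card = k - 1) {d : V →₀ ℕ}
    (hle : Finsupp.single y 1 + ∑ e ∈ M, edgeDeg e ≤ d) (c : K) :
    monomial d c ∈ vertexColonIdeal K G x k := by
  refine monomial_mem_of_le ?_ hle c
  rw [← one_mul (1 : K), ← monomial_mul, ← X, ← prod_edgeProd_eq_monomial]
  exact X_mul_mem_vertexColonIdeal hxy (Ideal.subset_span ⟨M, hM, hcard, rfl⟩)

theorem monomial_mem_vertexColonIdeal {M : Finset (Sym2 V)}
    (hM : IsMatchingSet G M) (hcard : M.card = k) {d : V →₀ ℕ}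
    (hle : ∑ e ∈ M, edgeDeg e ≤ d + Finsupp.single x 1) (c : K) :
    monomial d c ∈ vertexColonIdeal K G x k := by
  classical
  have hcard_erase : ∀ e ∈ M, (M.erase e).card = k - 1 := fun e he => by
    rw [Finset.card_erase_of_mem he, hcard]
  by_cases hcov : ∃ y, s(x, y) ∈ M
  · obtain ⟨y, he⟩ := hcov
    have hxy : G.Adj x y := hM.1 he
    refine monomial_mem_vertexColonIdeal_of_neighbor hxy
      (hM.erase_delVerts he (by simp)) (hcard_erase _ he) ?_ c
    rw [← Finset.add_sum_erase M _ he, edgeDeg_mk, add_comm d, add_assoc] at hle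
    exact le_of_add_le_add_left hle
  have hfree : ∀ f ∈ M, x ∉ f := fun f hf hxf => by
    obtain ⟨y, rfl⟩ := Sym2.mem_iff_exists.1 hxf
    exact hcov ⟨y, hf⟩
  have hle' : ∑ e ∈ M, edgeDeg e ≤ d := Finsupp.le_of_le_add_single_of_apply_eq_zero
    (by
      rw [Finset.sum_apply']
      exact Finset.sum_eq_zero fun f hf => edgeDeg_apply_eq_zero (hfree f hf)) hle
  by_cases hnbr : ∃ y z, G.Adj x y ∧ s(y, z) ∈ M
  · obtain ⟨y, z, hxy, he⟩ := hnbr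
    refine monomial_mem_vertexColonIdeal_of_neighbor hxy
      (hM.erase_delVerts he fun w hw => by
        rcases hw with rfl | rfl
        exacts [Or.inr hfree, Or.inl (Sym2.mem_mk_left _ _)]) (hcard_erase _ he) ?_ c
    rw [← Finset.add_sum_erase M _ he, edgeDeg_mk, add_assoc] at hle'
    exact le_trans (add_le_add_right le_add_self _) hle'
  · refine Submodule.mem_sup_right (monomial_mem_of_le ?_ hle' c)
    rw [← prod_edgeProd_eq_monomial]
    refine Ideal.subset_span ⟨M, isMatchingSet_delVerts_iff.2 ⟨hM, ?_⟩, hcard, rfl⟩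
    rintro e he w hwe (rfl | hxw)
    · exact hfree e he hwe
    · obtain ⟨z, rfl⟩ := Sym2.mem_iff_exists.1 hwe
      exact hnbr ⟨w, z, hxw, he⟩

theorem colon_le_vertexColonIdeal :
    (matchingPow K G k).colon (Ideal.span {(X x : MvPolynomial V K)}) ≤
      vertexColonIdeal K G x k := by
  classical
  intro p hp
  rw [Ideal.mem_colon_span_singleton, matchingPow_eq_span_monomial,
    mem_ideal_span_monomial_image] at hp
  rw [p.as_sum]
  refine Submodule.sum_mem _ fun d hd => ?_
  obtain ⟨_, ⟨M, hM, hcard, rfl⟩, hle⟩ :=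
    hp _ (by rw [support_mul_X]; exact Finset.mem_map_of_mem _ hd)
  exact monomial_mem_vertexColonIdeal hM hcard hle _

end Colon

end

theorem matchingPow_colon_vertex_general {K : Type*} [Field K] {V : Type*}
    (G : SimpleGraph V) (x : V) (k : ℕ) (hk1 : 2 ≤ k) :
    Submodule.colon (matchingPow K G k) (Ideal.span {(X x : MvPolynomial V K)}) =
      (⨆ y ∈ G.neighborSet x,
          Ideal.span {(X y : MvPolynomial V K)} * matchingPow K (delVerts G {x, y}) (k - 1)) +
        matchingPow K (delVerts G (insert x (G.neighborSet x))) k :=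
  le_antisymm colon_le_vertexColonIdeal (vertexColonIdeal_le_colon (by omega))

/-- `(I(G)^{[k]} : x) = ∑_{y ∈ N_G(x)} y · I(G \ {x,y})^{[k-1]} + I(G \ N_G[x])^{[k]}`. -/
theorem matchingPow_colon_vertex {K : Type*} [Field K] {V : Type*} [Fintype V]
    (G : SimpleGraph V) (x : V) (k : ℕ) (hk1 : 2 ≤ k) (hk2 : k ≤ matchingNumber G) :
    Submodule.colon (matchingPow K G k) (Ideal.span {(X x : MvPolynomial V K)}) =
      (⨆ y ∈ G.neighborSet x,
          Ideal.span {(X y : MvPolynomial V K)} * matchingPow K (delVerts G {x, y}) (k - 1)) +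
        matchingPow K (delVerts G (insert x (G.neighborSet x))) k :=
  matchingPow_colon_vertex_general G x k hk1
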